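/- arXiv:1509.01192 — 2 statements merged into one kernel-verified Lean document; each statement's English description precedes it below -/
import Mathlib

section
/- Let x, y, z be pairwise coprime integers, each at least 2, such that x divides y + z. Then the largest positive integer that is not expressible in the form a·x + b·y + c·z with a, b, c nonnegative integers equals max{ ⌊xz/(y+z)⌋ · y , ⌊xy/(y+z)⌋ · z } − x. -/
/-!
Since `z ≡ -y (mod x)`, a combination `a x + b y + c z` is congruent to `(b - c) y`. Writing the
class of `m` modulo `x` as `d y` with `0 ≤ d < x`, the least representable number in that class
is therefore `min (d y) ((x - d) z)`, and `m` is representable iff it is at least that number.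
Now `d y ≤ (x - d) z` iff `d ≤ xz/(y+z)`, and `⌊xz/(y+z)⌋ + ⌊xy/(y+z)⌋ ≥ x - 1`, so these least
elements are bounded by `M = max (⌊xz/(y+z)⌋ y) (⌊xy/(y+z)⌋ z)`, with equality for
`d = ⌊xz/(y+z)⌋` or `d = x - ⌊xy/(y+z)⌋`. Hence every `m > M - x` is representable while
`M - x` is not.
-/

def IsRepresentable (x y z n : ℕ) : Prop :=
  ∃ a b c : ℕ, n = a * x + b * y + c * z

/-- For coprime `x, y` with `x ∣ y + z`, the largest element of the Apéry set of `x` in the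
semigroup generated by `x, y, z`. -/
def aperyMax (x y z : ℕ) : ℕ :=
  max (x * z / (y + z) * y) (x * y / (y + z) * z)

namespace IsRepresentable

variable {x y z n : ℕ}

lemma swap (h : IsRepresentable x y z n) : IsRepresentable x z y n := by
  obtain ⟨a, b, c, rfl⟩ := h
  exact ⟨a, c, b, by ring⟩

lemma add_mul (h : IsRepresentable x y z n) (t : ℕ) : IsRepresentable x y z (n + x * t) := by
  obtain ⟨a, b, c, rfl⟩ := h
  exact ⟨a + t, b, c, by ring⟩

end IsRepresentable

lemma aperyMax_comm (x y z : ℕ) : aperyMax x z y = aperyMax x y z := by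
  rw [aperyMax, aperyMax, max_comm, add_comm z]

lemma min_mul_le_aperyMax (x y z d : ℕ) : min (d * y) ((x - d) * z) ≤ aperyMax x y z := by
  rcases Nat.eq_zero_or_pos (y + z) with hyz | hyz
  · simp [show y = 0 by omega]
  have hfloor : x ≤ x * z / (y + z) + x * y / (y + z) + 1 := by
    calc x = (x * z + x * y) / (y + z) := by
          rw [← mul_add, add_comm z, Nat.mul_div_cancel _ hyz]
      _ ≤ _ := Nat.add_div_le_div_add_div_add_one _ _ _
  unfold aperyMax
  generalize x * z / (y + z) = d₀ at hfloor ⊢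
  generalize x * y / (y + z) = e₀ at hfloor ⊢
  rcases le_or_gt d d₀ with hd | hd
  · exact (min_le_left _ _).trans <| (Nat.mul_le_mul_right y hd).trans (le_max_left _ _)
  · exact (min_le_right _ _).trans <|
      (Nat.mul_le_mul_right z (by omega : x - d ≤ e₀)).trans (le_max_right _ _)

section Apery

variable {x y z d m : ℕ}

lemma natCast_eq_neg_of_dvd_add (hdvd : x ∣ y + z) : (z : ZMod x) = -y :=
  eq_neg_of_add_eq_zero_right <| by exact_mod_cast (ZMod.natCast_eq_zero_iff _ _).mpr hdvd

lemma natCast_sub_mul_eq (hdvd : x ∣ y + z) (hd : d ≤ x) :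
    (((x - d) * z : ℕ) : ZMod x) = d * y := by
  push_cast [hd, natCast_eq_neg_of_dvd_add hdvd]
  simp

lemma exists_lt_natCast_eq_mul (hx : 0 < x) (hxy : x.Coprime y) (m : ℕ) :
    ∃ d < x, (m : ZMod x) = d * y := by
  have : NeZero x := ⟨hx.ne'⟩
  obtain ⟨u, hu⟩ := (ZMod.isUnit_iff_coprime y x).mpr hxy.symm
  refine ⟨((m : ZMod x) * ↑u⁻¹).val, ZMod.val_lt _, ?_⟩
  rw [ZMod.natCast_zmod_val, ← hu, mul_assoc, Units.inv_mul, mul_one]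

lemma isRepresentable_of_modEq_of_le {w : ℕ} (hw : IsRepresentable x y z w)
    (h : w ≡ m [MOD x]) (hle : w ≤ m) : IsRepresentable x y z m := by
  obtain ⟨t, ht⟩ := (Nat.modEq_iff_dvd' hle).mp h
  convert hw.add_mul t using 1
  omega

lemma min_le_of_isRepresentable (hxy : x.Coprime y) (hdvd : x ∣ y + z) (hd : d < x)
    (hm : (m : ZMod x) = d * y) (h : IsRepresentable x y z m) :
    min (d * y) ((x - d) * z) ≤ m := by
  obtain ⟨a, b, c, rfl⟩ := h
  have hbcd : (b : ZMod x) = c + d := by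
    refine ((ZMod.isUnit_iff_coprime y x).mpr hxy.symm).mul_left_cancel ?_
    push_cast [ZMod.natCast_self, natCast_eq_neg_of_dvd_add hdvd] at hm
    linear_combination hm
  rcases le_or_gt c b with hcb | hbc
  · have : d ≤ b - c := by
      have hmod : ((b - c : ℕ) : ZMod x) = d := by
        push_cast [hcb, hbcd]
        ring
      rw [ZMod.natCast_eq_natCast_iff', Nat.mod_eq_of_lt hd] at hmod
      exact hmod ▸ Nat.mod_le _ _
    calc min (d * y) ((x - d) * z) ≤ d * y := min_le_left _ _
      _ ≤ b * y := Nat.mul_le_mul_right _ (by omega)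
      _ ≤ a * x + b * y + c * z := by omega
  · have : x ≤ c - b + d := by
      refine Nat.le_of_dvd (by omega) ((ZMod.natCast_eq_zero_iff _ _).mp ?_)
      push_cast [hbc.le, hbcd]
      ring
    calc min (d * y) ((x - d) * z) ≤ (x - d) * z := min_le_right _ _
      _ ≤ c * z := Nat.mul_le_mul_right _ (by omega)
      _ ≤ a * x + b * y + c * z := by omega

lemma isRepresentable_iff_min_le (hxy : x.Coprime y) (hdvd : x ∣ y + z) (hd : d < x)
    (hm : (m : ZMod x) = d * y) :
    IsRepresentable x y z m ↔ min (d * y) ((x - d) * z) ≤ m := by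
  refine ⟨min_le_of_isRepresentable hxy hdvd hd hm, fun h => ?_⟩
  rcases min_le_iff.mp h with h | h
  · refine isRepresentable_of_modEq_of_le ⟨0, d, 0, by ring⟩ ?_ h
    rw [← ZMod.natCast_eq_natCast_iff]
    push_cast
    exact hm.symm
  · refine isRepresentable_of_modEq_of_le ⟨0, 0, x - d, by ring⟩ ?_ h
    rw [← ZMod.natCast_eq_natCast_iff, natCast_sub_mul_eq hdvd hd.le, hm]

lemma isRepresentable_of_aperyMax_lt_add (hxy : x.Coprime y) (hdvd : x ∣ y + z) (hx : 0 < x)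
    (h : aperyMax x y z < m + x) : IsRepresentable x y z m := by
  obtain ⟨d, hd, hm⟩ := exists_lt_natCast_eq_mul hx hxy m
  rw [isRepresentable_iff_min_le hxy hdvd hd hm]
  refine Nat.ModEq.le_of_lt_add ?_ ((min_mul_le_aperyMax x y z d).trans_lt h)
  rw [← ZMod.natCast_eq_natCast_iff]
  rcases min_choice (d * y) ((x - d) * z) with h | h <;> rw [h]
  · push_cast
    exact hm.symm
  · rw [natCast_sub_mul_eq hdvd hd.le, hm]

lemma not_isRepresentable_of_add_eq (hxy : x.Coprime y) (hdvd : x ∣ y + z) (hx : 0 < x)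
    (hd : d * (y + z) ≤ x * z) (hn : m + x = d * y) : ¬ IsRepresentable x y z m := by
  have hdx : d < x := by
    by_contra! hxd
    have : x * y = 0 := by nlinarith
    simp [hx.ne', show y = 0 by simpa [hx.ne'] using this] at hn
  have hm : (m : ZMod x) = d * y := by
    have := congrArg (Nat.cast : ℕ → ZMod x) hn
    push_cast [ZMod.natCast_self] at this
    simpa using this
  rw [isRepresentable_iff_min_le hxy hdvd hdx hm, min_eq_left]
  · omega
  · rw [Nat.sub_mul]
    rw [mul_add] at hd
    omega

lemma not_isRepresentable_aperyMax_sub (hxy : x.Coprime y) (hxz : x.Coprime z)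
    (hdvd : x ∣ y + z) (hx : 0 < x) (hM : x ≤ aperyMax x y z) :
    ¬ IsRepresentable x y z (aperyMax x y z - x) := by
  wlog hle : x * y / (y + z) * z ≤ x * z / (y + z) * y generalizing y z
  · rw [← aperyMax_comm] at hM ⊢
    exact fun h => this hxz hxy (by rwa [add_comm]) hM (by rw [add_comm]; omega) h.swap
  have hmax : aperyMax x y z = x * z / (y + z) * y := max_eq_left hle
  exact not_isRepresentable_of_add_eq hxy hdvd hx (Nat.div_mul_le_self _ _) (by omega)

lemma not_isRepresentable_one (hx : 2 ≤ x) (hy : 2 ≤ y) (hz : 2 ≤ z) :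
    ¬ IsRepresentable x y z 1 := by
  rintro ⟨a, b, c, h⟩
  rcases a with _ | a <;> rcases b with _ | b <;> rcases c with _ | c <;> nlinarith

end Apery

lemma isRepresentable_iff_exists_int {x y z n : ℕ} :
    IsRepresentable x y z n ↔ ∃ a b c : ℕ, (n : ℤ) = a * x + b * y + c * z := by
  simp only [IsRepresentable]
  norm_cast

theorem stmt16_general (x y z : ℕ) (hx : 2 ≤ x) (hy : 2 ≤ y) (hz : 2 ≤ z)
    (hxy : Nat.Coprime x y) (hxz : Nat.Coprime x z)
    (hdvd : x ∣ y + z) :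
    IsGreatest {m : ℤ | 0 < m ∧ ¬ ∃ a b c : ℕ,
        m = (a : ℤ) * x + (b : ℤ) * y + (c : ℤ) * z}
      (max (((x : ℤ) * z / ((y : ℤ) + z)) * y) (((x : ℤ) * y / ((y : ℤ) + z)) * z)
        - (x : ℤ)) := by
  have hx0 : 0 < x := by omega
  have hM : max ((x : ℤ) * z / ((y : ℤ) + z) * y) ((x : ℤ) * y / ((y : ℤ) + z) * z) =
      aperyMax x y z := by
    simp [aperyMax]
  have hxM : x + 1 ≤ aperyMax x y z := by
    by_contra! h
    exact not_isRepresentable_one hx hy hz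
      (isRepresentable_of_aperyMax_lt_add hxy hdvd hx0 (by omega))
  rw [hM, ← Nat.cast_sub (by omega)]
  refine ⟨⟨by omega, ?_⟩, ?_⟩
  · rw [← isRepresentable_iff_exists_int]
    exact not_isRepresentable_aperyMax_sub hxy hxz hdvd hx0 (by omega)
  · rintro m ⟨hm0, hm⟩
    lift m to ℕ using hm0.le
    rw [← isRepresentable_iff_exists_int] at hm
    by_contra! hlt
    exact hm (isRepresentable_of_aperyMax_lt_add hxy hdvd hx0 (by omega))

/-- **Brauer–Shockley.** If `x, y, z ≥ 2` are pairwise coprime and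
`x ∣ y + z`, then the Frobenius number of `x, y, z` (the largest positive integer not of
the form `ax + by + cz` with `a, b, c ≥ 0`) equals
`max{⌊xz/(y+z)⌋·y, ⌊xy/(y+z)⌋·z} − x`. -/
theorem stmt16 (x y z : ℕ) (hx : 2 ≤ x) (hy : 2 ≤ y) (hz : 2 ≤ z)
    (hxy : Nat.Coprime x y) (hxz : Nat.Coprime x z) (hyz : Nat.Coprime y z)
    (hdvd : x ∣ y + z) :
    IsGreatest {m : ℤ | 0 < m ∧ ¬ ∃ a b c : ℕ,
        m = (a : ℤ) * x + (b : ℤ) * y + (c : ℤ) * z}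
      (max (((x : ℤ) * z / ((y : ℤ) + z)) * y) (((x : ℤ) * y / ((y : ℤ) + z)) * z)
        - (x : ℤ)) :=
  stmt16_general x y z hx hy hz hxy hxz hdvd
end

section
/- Let (M, φ) be an F-crystal over k that is isoclinic of slope λ. For an integer q ≥ 1, let α_M(q) be the largest integer with φ^q(M) ⊆ p^{α_M(q)} M and β_M(q) the smallest integer with p^{β_M(q)} M ⊆ φ^q(M). Then for every q ≥ 1, either α_M(q) = β_M(q) = qλ (in particular qλ ∈ ℤ), or α_M(q) < qλ < β_M(q). -/
/-! Fix a basis of `M`, of rank `r`, let `A` be the matrix of `φ^q` and `d` the `p`-adic valuation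
of `det A`. The matrix of `φ^(nq)` is `A · σ^q(A) ⋯ σ^((n-1)q)(A)`, so its determinant has valuation
`n d`; comparing this with the isoclinic bounds on `φ^(nq)` as `n → ∞` forces `d = r q λ`.
Now `φ^q(M) ⊆ p^α M` gives `p^(rα) ∣ det A` and `p^β M ⊆ φ^q(M)` gives `det A ∣ p^(rβ)`, so
`α ≤ qλ ≤ β`. If `rα = d`, then `A = p^α B` with `B` invertible, hence `p^α M ⊆ φ^q(M)` and
`β = α`; symmetrically if `rβ = d`. -/

open WittVector

section FCrystalDefs

variable (p : ℕ) [Fact p.Prime] (k : Type) [Field k] [IsAlgClosed k] [CharP k p]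
variable (M : Type) [AddCommGroup M] [Module (WittVector p k) M]

/-- `(M, φ)` is an `F`-crystal over `k`: `M` is a finite free `W(k)`-module and `φ` is an
injective `σ`-semilinear additive map, where `σ` is the Witt vector Frobenius. -/
structure IsFCrystal (φ : M → M) : Prop where
  free : Module.Free (WittVector p k) M
  finite : Module.Finite (WittVector p k) M
  map_add : ∀ x y : M, φ (x + y) = φ x + φ y
  map_smul : ∀ (a : WittVector p k) (x : M), φ (a • x) = WittVector.frobenius a • φ x
  injective : Function.Injective φ

variable (M' : Type) [AddCommGroup M'] [Module (WittVector p k) M']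

/-- Isomorphism of `F`-crystals: a `W(k)`-linear bijection commuting with the Frobenii. -/
def FIso (φ : M → M) (φ' : M' → M') : Prop :=
  ∃ h : M ≃ₗ[WittVector p k] M', ∀ x : M, h (φ x) = φ' (h x)

/-- The isomorphism number `n_M` of the `F`-crystal `(M, φ)`: the smallest `n ≥ 0` such that
for every `W(k)`-linear automorphism `g` of `M` congruent to `id_M` modulo `p^n`, the
`F`-crystal `(M, g ∘ φ)` is isomorphic to `(M, φ)`. -/
noncomputable def isoNum (φ : M → M) : ℕ :=
  sInf {n | ∀ g : M ≃ₗ[WittVector p k] M,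
    (∀ x : M, ∃ y : M, g x - x = (p : WittVector p k) ^ n • y) →
    FIso p k M M (fun x => g (φ x)) φ}

/-- `(M, φ)` is isosimple: `M ≠ 0` and every `φ`-stable `W(k)`-submodule `N ⊆ M` with
`M/N` torsion-free is `0` or `M`. -/
def IsIsosimple (φ : M → M) : Prop :=
  Nontrivial M ∧ ∀ N : Submodule (WittVector p k) M,
    (∀ x ∈ N, φ x ∈ N) →
    (∀ (a : WittVector p k) (x : M), a ≠ 0 → a • x ∈ N → x ∈ N) →
    N = ⊥ ∨ N = ⊤

/-- The submodule `φ(M)` of `M`. -/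
noncomputable def phiImage (φ : M → M) : Submodule (WittVector p k) M :=
  Submodule.span (WittVector p k) (Set.range φ)

/-- The `W(k)`-module `Q` has length `s`, expressed via composition series. -/
def LengthEq (Q : Type) [AddCommGroup Q] [Module (WittVector p k) Q] (s : ℕ) : Prop :=
  ∃ c : CompositionSeries (Submodule (WittVector p k) Q),
    c.head = ⊥ ∧ c.last = ⊤ ∧ c.length = s

end FCrystalDefs

/-- `(M, φ)` is isoclinic of slope `l ≥ 0`. -/
def IsIsoclinic (p : ℕ) [Fact p.Prime] (k : Type) [Field k] [IsAlgClosed k] [CharP k p]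
    (M : Type) [AddCommGroup M] [Module (WittVector p k) M] (φ : M → M) (l : ℚ) : Prop :=
  0 ≤ l ∧ ∃ c : ℕ, ∀ q : ℕ, 1 ≤ q →
    (∀ x : M, ∃ y : M, (p : WittVector p k) ^ c • φ^[q] x =
      (p : WittVector p k) ^ ((⌈(q : ℚ) * l⌉).toNat) • y) ∧
    (∀ x : M, ∃ y : M, (p : WittVector p k) ^ ((⌈(q : ℚ) * l⌉).toNat + c) • x = φ^[q] y)

open Matrix

theorem nonpos_of_forall_nat_mul_le {K : Type*} [Field K] [LinearOrder K] [IsStrictOrderedRing K]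
    [Archimedean K] {t c : K} (h : ∀ n : ℕ, 1 ≤ n → n * t ≤ c) : t ≤ 0 := by
  by_contra! ht
  obtain ⟨n, hn⟩ := exists_nat_gt (c / t)
  have hn1 := h (n + 1) (by omega)
  rw [div_lt_iff₀ ht] at hn
  push_cast at hn1
  nlinarith

namespace Module.Basis

variable {R M ι : Type*} [CommRing R] [AddCommGroup M] [Module R M] [Fintype ι]
variable (b : Basis ι R M) {σ : R →+* R}

theorem equivFun_semilinear_apply (f : M →ₛₗ[σ] M) (x : M) :
    b.equivFun (f x) = b.toMatrix (f ∘ b) *ᵥ (σ ∘ b.equivFun x) := by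
  have hfx : f x = ∑ j, σ (b.repr x j) • f (b j) := by
    conv_lhs => rw [← b.sum_repr x]
    rw [map_sum]
    simp only [map_smulₛₗ]
  ext i
  simp [hfx, mulVec, dotProduct, toMatrix_apply, mul_comm]

theorem toMatrix_semilinear_comp (f : M →ₛₗ[σ] M) (v : ι → M) :
    b.toMatrix (f ∘ v) = b.toMatrix (f ∘ b) * (b.toMatrix v).map σ := by
  ext i j
  rw [toMatrix_apply, Function.comp_apply, ← b.equivFun_apply, b.equivFun_semilinear_apply]
  rfl

omit [Fintype ι] in
theorem toMatrix_const_smul (a : R) (v : ι → M) : b.toMatrix (a • v) = a • b.toMatrix v := by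
  ext i j
  simp [toMatrix_apply]

theorem forall_exists_apply_eq_smul_iff (f : M →ₛₗ[σ] M) (c : R) :
    (∀ x, ∃ y, f x = c • y) ↔ ∀ i j, c ∣ b.toMatrix (f ∘ b) i j := by
  refine ⟨fun h i j => ?_, fun h x => ?_⟩
  · obtain ⟨y, hy⟩ := h (b j)
    exact ⟨b.repr y i, by simp [toMatrix_apply, hy]⟩
  · choose B hB using h
    have hA : b.toMatrix (f ∘ b) = c • Matrix.of B := by ext i j; exact hB i j
    refine ⟨b.equivFun.symm (Matrix.of B *ᵥ (σ ∘ b.equivFun x)), b.equivFun.injective ?_⟩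
    rw [equivFun_semilinear_apply, map_smul, LinearEquiv.apply_symm_apply, hA, smul_mulVec]

theorem forall_exists_smul_eq_apply_iff [DecidableEq ι] (f : M →ₛₗ[σ] M)
    (hσ : Function.Surjective σ) (c : R) :
    (∀ x, ∃ y, c • x = f y) ↔ ∃ C, b.toMatrix (f ∘ b) * C = c • 1 := by
  refine ⟨fun h => ?_, fun ⟨C, hC⟩ x => ?_⟩
  · choose y hy using fun j => h (b j)
    refine ⟨(b.toMatrix y).map σ, ?_⟩
    rw [← toMatrix_semilinear_comp, ← toMatrix_self b, ← toMatrix_const_smul]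
    exact congrArg b.toMatrix (funext hy).symm
  · choose z hz using fun i => hσ ((C *ᵥ b.equivFun x) i)
    refine ⟨b.equivFun.symm z, b.equivFun.injective ?_⟩
    rw [equivFun_semilinear_apply, LinearEquiv.apply_symm_apply, show σ ∘ z = _ from funext hz,
      mulVec_mulVec, hC, smul_mulVec, one_mulVec, map_smul]

end Module.Basis

namespace Matrix

variable {R ι : Type*} [CommRing R] [IsDomain R] [Fintype ι] [DecidableEq ι] {ϖ : R}
  {A : Matrix ι ι R} {d s : ℕ}

omit [IsDomain R] [Fintype ι] [DecidableEq ι] in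
theorem exists_eq_smul_of_dvd {c : R} (h : ∀ i j, c ∣ A i j) : ∃ B : Matrix ι ι R, A = c • B := by
  choose B hB using h
  exact ⟨Matrix.of B, by ext i j; exact hB i j⟩

theorem card_mul_le_of_pow_dvd (hϖ : Irreducible ϖ) (hA : Associated A.det (ϖ ^ d))
    (h : ∀ i j, ϖ ^ s ∣ A i j) : Fintype.card ι * s ≤ d := by
  obtain ⟨B, rfl⟩ := exists_eq_smul_of_dvd h
  rw [← pow_dvd_pow_iff hϖ.ne_zero hϖ.not_isUnit, ← hA.dvd_iff_dvd_right, det_smul, ← pow_mul,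
    mul_comm]
  exact dvd_mul_right _ _

theorem le_card_mul_of_mul_eq_pow_smul_one (hϖ : Irreducible ϖ)
    (hA : Associated A.det (ϖ ^ d)) {C : Matrix ι ι R} (hC : A * C = ϖ ^ s • 1) :
    d ≤ Fintype.card ι * s := by
  rw [← pow_dvd_pow_iff hϖ.ne_zero hϖ.not_isUnit, hA.symm.dvd_iff_dvd_left, mul_comm, pow_mul,
    ← mul_one ((ϖ ^ s) ^ _), ← det_one (n := ι), ← det_smul, ← hC, det_mul]
  exact dvd_mul_right _ _

theorem exists_mul_eq_pow_smul_one_of_pow_dvd (hϖ : Irreducible ϖ)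
    (hA : Associated A.det (ϖ ^ (Fintype.card ι * s))) (h : ∀ i j, ϖ ^ s ∣ A i j) :
    ∃ C, A * C = ϖ ^ s • 1 := by
  obtain ⟨B, rfl⟩ := exists_eq_smul_of_dvd h
  rw [det_smul, ← pow_mul, mul_comm s] at hA
  have hB : IsUnit B.det := isUnit_of_associated_mul hA (pow_ne_zero _ hϖ.ne_zero)
  exact ⟨B⁻¹, by rw [smul_mul, mul_nonsing_inv _ hB]⟩

theorem pow_dvd_of_mul_eq_pow_smul_one (hϖ : Irreducible ϖ)
    (hA : Associated A.det (ϖ ^ (Fintype.card ι * s))) {C : Matrix ι ι R}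
    (hC : A * C = ϖ ^ s • 1) (i j : ι) : ϖ ^ s ∣ A i j := by
  have hdet : A.det * C.det = ϖ ^ (Fintype.card ι * s) := by
    rw [← det_mul, hC, det_smul, det_one, mul_one, ← pow_mul, mul_comm s]
  have hCu : IsUnit C.det :=
    isUnit_of_associated_mul ((hA.symm.mul_right _).trans (.of_eq hdet))
      (pow_ne_zero _ hϖ.ne_zero)
  have hAC : A = ϖ ^ s • C⁻¹ := by
    rw [← one_mul C⁻¹, ← smul_mul, ← hC, mul_assoc, mul_nonsing_inv _ hCu, mul_one]
  exact ⟨C⁻¹ i j, by rw [hAC, smul_apply, smul_eq_mul]⟩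

theorem det_ne_zero_of_mul_eq_smul_one {C : Matrix ι ι R} {c : R} (hc : c ≠ 0)
    (h : A * C = c • 1) : A.det ≠ 0 := by
  have hdet := congrArg det h
  rw [det_mul, det_smul, det_one, mul_one] at hdet
  exact left_ne_zero_of_mul (hdet ▸ pow_ne_zero _ hc)

theorem eq_and_eq_or_lt_and_lt_of_isGreatest_of_isLeast (hϖ : Irreducible ϖ)
    (hA : Associated A.det (ϖ ^ d)) {α β : ℕ} (hα : IsGreatest {s | ∀ i j, ϖ ^ s ∣ A i j} α)
    (hβ : IsLeast {s | ∃ C, A * C = ϖ ^ s • 1} β) {t : ℚ} (ht : (d : ℚ) = Fintype.card ι * t) :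
    ((α : ℚ) = t ∧ (β : ℚ) = t) ∨ ((α : ℚ) < t ∧ t < β) := by
  have hr : (0 : ℚ) < Fintype.card ι := by
    by_contra! h
    have : IsEmpty ι := Fintype.card_eq_zero_iff.mp (by exact_mod_cast h.antisymm (by positivity))
    exact absurd (hα.2 (show α + 1 ∈ _ from fun i => isEmptyElim i)) (by omega)
  have hcast (n : ℕ) : Fintype.card ι * n = d ↔ (n : ℚ) = t := by
    rw [← Nat.cast_inj (R := ℚ), Nat.cast_mul, ht, mul_right_inj' hr.ne']
  obtain ⟨C, hC⟩ := hβ.1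
  have hαt : (α : ℚ) ≤ t := by
    refine le_of_mul_le_mul_left ?_ hr
    rw [← ht]
    exact_mod_cast card_mul_le_of_pow_dvd hϖ hA hα.1
  have htβ : t ≤ (β : ℚ) := by
    refine le_of_mul_le_mul_left ?_ hr
    rw [← ht]
    exact_mod_cast le_card_mul_of_mul_eq_pow_smul_one hϖ hA hC
  by_cases h : (α : ℚ) = t ∨ (β : ℚ) = t
  · have hβα : β ≤ α := by
      rcases h with h | h
      · rw [← hcast] at h
        subst h
        exact hβ.2 (exists_mul_eq_pow_smul_one_of_pow_dvd hϖ hA hα.1)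
      · rw [← hcast] at h
        subst h
        exact hα.2 (pow_dvd_of_mul_eq_pow_smul_one hϖ hA hC)
    have : (β : ℚ) ≤ α := by exact_mod_cast hβα
    left
    constructor <;> linarith
  · push Not at h
    exact Or.inr ⟨hαt.lt_of_ne h.1, htβ.lt_of_ne h.2.symm⟩

end Matrix

namespace IsFCrystal

variable {p : ℕ} [Fact p.Prime] {k : Type} [Field k] {M : Type} [AddCommGroup M]
  [Module (WittVector p k) M] {φ : M → M}

def iterate (hc : IsFCrystal p k M φ) (m : ℕ) :
    M →ₛₗ[(frobenius : WittVector p k →+* WittVector p k) ^ m] M where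
  toFun := φ^[m]
  map_add' x y := by
    induction m generalizing x y with
    | zero => rfl
    | succ m ih => simp only [Function.iterate_succ_apply, hc.map_add, ih]
  map_smul' a x := by
    induction m generalizing a x with
    | zero => rfl
    | succ m ih =>
      simp only [Function.iterate_succ_apply, hc.map_smul, ih, pow_succ]
      rfl

theorem frobenius_pow_surjective [CharP k p] [PerfectRing k p] (m : ℕ) :
    Function.Surjective ((frobenius : WittVector p k →+* WittVector p k) ^ m) := by
  rw [RingHom.coe_pow]
  exact ((frobenius_bijective p k).iterate m).surjective

variable {ι : Type*} [Fintype ι] [DecidableEq ι]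

theorem associated_det_toMatrix_iterate_mul (hc : IsFCrystal p k M φ)
    (b : Module.Basis ι (WittVector p k) M) {q d : ℕ}
    (hd : Associated (b.toMatrix (φ^[q] ∘ b)).det ((p : WittVector p k) ^ d)) (n : ℕ) :
    Associated (b.toMatrix (φ^[n * q] ∘ b)).det ((p : WittVector p k) ^ (n * d)) := by
  induction n with
  | zero => simp [Module.Basis.toMatrix_self]
  | succ n ih =>
    have hsplit : φ^[(n + 1) * q] ∘ b = hc.iterate q ∘ (φ^[n * q] ∘ b) := by
      rw [add_mul, one_mul, add_comm, Function.iterate_add]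
      rfl
    rw [hsplit, b.toMatrix_semilinear_comp, Matrix.det_mul, ← RingHom.mapMatrix_apply,
      ← RingHom.map_det, add_mul, one_mul, add_comm, pow_add]
    have h := hd.mul_mul (ih.map ((frobenius : WittVector p k →+* WittVector p k) ^ q))
    rwa [map_pow, map_natCast] at h

end IsFCrystal

theorem IsIsoclinic.cast_eq_card_mul_of_associated_det {p : ℕ} [Fact p.Prime] {k : Type}
    [Field k] [IsAlgClosed k] [CharP k p] {M : Type} [AddCommGroup M] [Module (WittVector p k) M]
    {φ : M → M} (hc : IsFCrystal p k M φ) {l : ℚ} (hiso : IsIsoclinic p k M φ l) {ι : Type*}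
    [Fintype ι] [DecidableEq ι] (b : Module.Basis ι (WittVector p k) M) {q d : ℕ} (hq : 1 ≤ q)
    (hd : Associated (b.toMatrix (φ^[q] ∘ b)).det ((p : WittVector p k) ^ d)) :
    (d : ℚ) = Fintype.card ι * (q * l) := by
  obtain ⟨hl, c, hiso⟩ := hiso
  have hp := WittVector.irreducible p (k := k)
  set r := Fintype.card ι
  have bounds (n : ℕ) (hn : 1 ≤ n) :
      r * ⌈(n * q : ℕ) * l⌉₊ ≤ r * c + n * d ∧ n * d ≤ r * (⌈(n * q : ℕ) * l⌉₊ + c) := by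
    obtain ⟨hsub, hsup⟩ := hiso (n * q) (one_le_mul hn hq)
    rw [Int.ceil_toNat] at hsub hsup
    have hdn := hc.associated_det_toMatrix_iterate_mul b hd n
    constructor
    · refine Matrix.card_mul_le_of_pow_dvd hp ?_ <|
        (b.forall_exists_apply_eq_smul_iff ((p : WittVector p k) ^ c • hc.iterate (n * q)) _).1 hsub
      rw [show ⇑((p : WittVector p k) ^ c • hc.iterate (n * q)) ∘ b
          = (p : WittVector p k) ^ c • (φ^[n * q] ∘ b) from rfl, b.toMatrix_const_smul,
        Matrix.det_smul, ← pow_mul, mul_comm c, pow_add]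
      exact .mul_mul .rfl hdn
    · obtain ⟨C, hC⟩ := (b.forall_exists_smul_eq_apply_iff (hc.iterate (n * q))
        (IsFCrystal.frobenius_pow_surjective _) _).1 hsup
      exact Matrix.le_card_mul_of_mul_eq_pow_smul_one hp hdn hC
  have hr : (0 : ℚ) ≤ r := r.cast_nonneg
  have hle : (d : ℚ) - r * (q * l) ≤ 0 :=
    nonpos_of_forall_nat_mul_le (c := r * c + r) fun n hn => by
      have h : (n * d : ℚ) ≤ r * (⌈(n * q : ℕ) * l⌉₊ + c) := by exact_mod_cast (bounds n hn).2
      have hceil := mul_le_mul_of_nonneg_left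
        (Nat.ceil_lt_add_one (show (0 : ℚ) ≤ (n * q : ℕ) * l by positivity)).le hr
      push_cast at h hceil
      linarith
  have hge : r * (q * l) - (d : ℚ) ≤ 0 :=
    nonpos_of_forall_nat_mul_le (c := r * c) fun n hn => by
      have h : (r * ⌈(n * q : ℕ) * l⌉₊ : ℚ) ≤ r * c + n * d := by exact_mod_cast (bounds n hn).1
      have hceil := mul_le_mul_of_nonneg_left (Nat.le_ceil ((n * q : ℕ) * l)) hr
      push_cast at h hceil
      linarith
  linarith

/-- For an isoclinic `F`-crystal of slope `λ` and any `q ≥ 1`, letting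
`α` be the largest integer with `φ^q(M) ⊆ p^α M` and `β` the smallest with
`p^β M ⊆ φ^q(M)`, either `α = β = qλ` (so `qλ ∈ ℤ`) or `α < qλ < β`. -/
theorem stmt18 (p : ℕ) [Fact p.Prime] (k : Type) [Field k] [IsAlgClosed k] [CharP k p]
    (M : Type) [AddCommGroup M] [Module (WittVector p k) M] (φ : M → M)
    (hcrys : IsFCrystal p k M φ) (l : ℚ) (hiso : IsIsoclinic p k M φ l)
    (q : ℕ) (hq : 1 ≤ q) (α β : ℕ)
    (hα : IsGreatest {a : ℕ | ∀ x : M, ∃ y : M,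
      φ^[q] x = (p : WittVector p k) ^ a • y} α)
    (hβ : IsLeast {b : ℕ | ∀ x : M, ∃ y : M,
      (p : WittVector p k) ^ b • x = φ^[q] y} β) :
    ((α : ℚ) = (q : ℚ) * l ∧ (β : ℚ) = (q : ℚ) * l) ∨
    ((α : ℚ) < (q : ℚ) * l ∧ (q : ℚ) * l < (β : ℚ)) := by
  classical
  have := hcrys.free
  have := hcrys.finite
  let b := Module.Free.chooseBasis (WittVector p k) M
  have hp := WittVector.irreducible p (k := k)
  have hα' : IsGreatest {s | ∀ i j, (p : WittVector p k) ^ s ∣ b.toMatrix (φ^[q] ∘ b) i j} α := by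
    convert hα using 3 with s
    exact (b.forall_exists_apply_eq_smul_iff (hcrys.iterate q) _).symm
  have hβ' : IsLeast {s | ∃ C, b.toMatrix (φ^[q] ∘ b) * C = (p : WittVector p k) ^ s • 1} β := by
    convert hβ using 3 with s
    exact (b.forall_exists_smul_eq_apply_iff (hcrys.iterate q)
      (IsFCrystal.frobenius_pow_surjective q) _).symm
  obtain ⟨C, hC⟩ := hβ'.1
  obtain ⟨d, hd⟩ := IsDiscreteValuationRing.associated_pow_irreducible
    (Matrix.det_ne_zero_of_mul_eq_smul_one (pow_ne_zero _ hp.ne_zero) hC) hp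
  exact Matrix.eq_and_eq_or_lt_and_lt_of_isGreatest_of_isLeast hp hd hα' hβ'
    (hiso.cast_eq_card_mul_of_associated_det hcrys b hq hd)
end
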